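/- arXiv:1312.0587 — 9 statements merged into one kernel-verified Lean document; each statement's English description precedes it below -/
import Mathlib

section
/- If {f_1,...,f_n} is a λ-contractive family on a metric space X (for every x,y there exists i with d(f_i(x),f_i(y)) ≤ λ·d(x,y)), then for any nonempty bounded set S ⊆ X of diameter D, some f_i satisfies diam(f_i(S)) ≤ 4λD — in the case n = 2: either diam(f_1(S)) ≤ 4λD or diam(f_2(S)) ≤ 4λD. -/
/-!
Call `x, y` `i`-close when `dist (fᵢ x) (fᵢ y) ≤ λ D`; on `S` every pair is `1`-close or `2`-close.
This is the fact that a graph or its complement has diameter at most `3`: if some `a, b ∈ S` are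
not joined by a path of two `1`-close steps, then `a, b` are `2`-close and every point of `S` is
`2`-close to `a` or to `b`, so any two points of `S` are joined by three `2`-close steps.
Hence `diam (f₁ '' S) ≤ 2λD` or `diam (f₂ '' S) ≤ 3λD`.
-/

open Metric

namespace Relation

variable {α : Type*} {R₁ R₂ : α → α → Prop} {S : Set α}

theorem comp_comp_of_not_comp_of_forall_or (hR₁ : ∀ x, R₁ x x) (hR₂ : ∀ x, R₂ x x)
    (hR₂s : ∀ {x y}, R₂ x y → R₂ y x) (hcover : ∀ x ∈ S, ∀ y ∈ S, R₁ x y ∨ R₂ x y)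
    {a b : α} (ha : a ∈ S) (hb : b ∈ S) (hab : ¬ Comp R₁ R₁ a b)
    {u v : α} (hu : u ∈ S) (hv : v ∈ S) : Comp R₂ (Comp R₂ R₂) u v := by
  have hR₂ab : R₂ a b :=
    (hcover a ha b hb).resolve_left fun h => hab ⟨b, h, hR₁ b⟩
  have hnear : ∀ x ∈ S, R₂ x a ∨ R₂ x b := by
    intro x hx
    rcases hcover a ha x hx with hax | hax
    · exact .inr <| (hcover x hx b hb).resolve_left fun hxb => hab ⟨x, hax, hxb⟩
    · exact .inl (hR₂s hax)
  rcases hnear u hu with hua | hub <;> rcases hnear v hv with hva | hvb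
  · exact ⟨a, hua, a, hR₂ a, hR₂s hva⟩
  · exact ⟨a, hua, b, hR₂ab, hR₂s hvb⟩
  · exact ⟨b, hub, a, hR₂s hR₂ab, hR₂s hva⟩
  · exact ⟨b, hub, b, hR₂ b, hR₂s hvb⟩

end Relation

section Metric

variable {X Y : Type*} [PseudoMetricSpace Y] (g : X → Y) (c : ℝ)

def DistImageLE (x y : X) : Prop := dist (g x) (g y) ≤ c

variable {g c}

theorem DistImageLE.refl (hc : 0 ≤ c) (x : X) : DistImageLE g c x x := by
  simpa [DistImageLE] using hc

theorem DistImageLE.symm {x y : X} (h : DistImageLE g c x y) : DistImageLE g c y x := by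
  rwa [DistImageLE, dist_comm]

theorem DistImageLE.dist_le_two_mul {x y : X}
    (h : Relation.Comp (DistImageLE g c) (DistImageLE g c) x y) :
    dist (g x) (g y) ≤ 2 * c := by
  obtain ⟨p, hxp, hpy⟩ := h
  unfold DistImageLE at hxp hpy
  linarith [dist_triangle (g x) (g p) (g y)]

theorem DistImageLE.dist_le_three_mul {x y : X}
    (h : Relation.Comp (DistImageLE g c) (Relation.Comp (DistImageLE g c) (DistImageLE g c)) x y) :
    dist (g x) (g y) ≤ 3 * c := by
  obtain ⟨p, hxp, q, hpq, hqy⟩ := h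
  unfold DistImageLE at hxp hpq hqy
  linarith [dist_triangle4 (g x) (g p) (g q) (g y)]

theorem diam_image_le_of_forall_dist_le {S : Set X} (hc : 0 ≤ c)
    (h : ∀ x ∈ S, ∀ y ∈ S, dist (g x) (g y) ≤ c) : diam (g '' S) ≤ c :=
  diam_le_of_forall_dist_le hc <| by
    rintro _ ⟨x, hx, rfl⟩ _ ⟨y, hy, rfl⟩
    exact h x hx y hy

end Metric

theorem stmt_0_general {X : Type*} [MetricSpace X] (lam : ℝ) (hlam0 : 0 < lam)
    (f₁ f₂ : X → X)
    (hcontr : ∀ x y : X, dist (f₁ x) (f₁ y) ≤ lam * dist x y ∨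
      dist (f₂ x) (f₂ y) ≤ lam * dist x y)
    (S : Set X) (hSb : Bornology.IsBounded S) :
    Metric.diam (f₁ '' S) ≤ 4 * lam * Metric.diam S ∨
      Metric.diam (f₂ '' S) ≤ 4 * lam * Metric.diam S := by
  set c := lam * diam S
  have hc : 0 ≤ c := mul_nonneg hlam0.le diam_nonneg
  have hcover : ∀ x ∈ S, ∀ y ∈ S, DistImageLE f₁ c x y ∨ DistImageLE f₂ c x y := by
    intro x hx y hy
    have hxy : lam * dist x y ≤ c :=
      mul_le_mul_of_nonneg_left (dist_le_diam_of_mem hSb hx hy) hlam0.le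
    exact (hcontr x y).imp (·.trans hxy) (·.trans hxy)
  by_cases h₁ : ∀ a ∈ S, ∀ b ∈ S, Relation.Comp (DistImageLE f₁ c) (DistImageLE f₁ c) a b
  · left
    calc diam (f₁ '' S) ≤ 2 * c :=
          diam_image_le_of_forall_dist_le (by positivity) fun a ha b hb =>
            DistImageLE.dist_le_two_mul (h₁ a ha b hb)
      _ ≤ 4 * lam * diam S := by linarith
  · right
    push Not at h₁
    obtain ⟨a, ha, b, hb, hab⟩ := h₁
    calc diam (f₂ '' S) ≤ 3 * c :=
          diam_image_le_of_forall_dist_le (by positivity) fun u hu v hv =>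
            DistImageLE.dist_le_three_mul <| Relation.comp_comp_of_not_comp_of_forall_or
              (DistImageLE.refl hc) (DistImageLE.refl hc)
              DistImageLE.symm hcover ha hb hab hu hv
      _ ≤ 4 * lam * diam S := by linarith

/-- If `{f₁, f₂}` is a `λ`-contractive family on a metric space `X`, then for any
nonempty bounded set `S ⊆ X`, either `diam (f₁ '' S) ≤ 4λ · diam S` or
`diam (f₂ '' S) ≤ 4λ · diam S`. -/
theorem stmt_0 {X : Type*} [MetricSpace X] (lam : ℝ) (hlam0 : 0 < lam) (hlam1 : lam < 1)
    (f₁ f₂ : X → X)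
    (hcontr : ∀ x y : X, dist (f₁ x) (f₁ y) ≤ lam * dist x y ∨
      dist (f₂ x) (f₂ y) ≤ lam * dist x y)
    (S : Set X) (hS : S.Nonempty) (hSb : Bornology.IsBounded S) :
    Metric.diam (f₁ '' S) ≤ 4 * lam * Metric.diam S ∨
      Metric.diam (f₂ '' S) ≤ 4 * lam * Metric.diam S :=
  stmt_0_general lam hlam0 f₁ f₂ hcontr S hSb
end

section
/- Let (X, 𝒟, diam) be a diameter space. Define d : X × X → ℝ by d(x,y) = inf{diam(U) : U ∈ 𝒟, x ∈ U, y ∈ U} for x ≠ y, and d(x,x) = 0. Then d is well-defined and is a pseudometric on X (symmetric, d(x,x)=0, and satisfies the triangle inequality). -/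
open scoped Classical

lemma le_csInf_add_csInf {α : Type*} [ConditionallyCompleteLattice α] [AddCommGroup α]
    [IsOrderedAddMonoid α] {s t : Set α} (hs : s.Nonempty) (ht : t.Nonempty) {c : α}
    (h : ∀ a ∈ s, ∀ b ∈ t, c ≤ a + b) : c ≤ sInf s + sInf t := by
  rw [← sub_le_iff_le_add]
  refine le_csInf hs fun a ha => ?_
  rw [sub_le_comm]
  exact le_csInf ht fun b hb => sub_le_iff_le_add'.2 (h a ha b hb)

lemma triangle_ite_eq_zero {X : Type*} {f : X → X → ℝ} (hf₀ : ∀ x y, 0 ≤ f x y)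
    (hf : ∀ x y z, f x z ≤ f x y + f y z) (x y z : X) :
    (if x = z then 0 else f x z) ≤ (if x = y then 0 else f x y) + (if y = z then 0 else f y z) := by
  by_cases hxz : x = z
  · rw [if_pos hxz]
    exact add_nonneg (by split_ifs <;> simp [hf₀]) (by split_ifs <;> simp [hf₀])
  by_cases hxy : x = y
  · subst hxy; simp
  by_cases hyz : y = z
  · subst hyz; simp
  simpa [hxz, hxy, hyz] using hf x y z

section DiameterSpace

variable {X : Type*} (𝒟 : Set (Set X)) (diam : Set X → ℝ)

def diamsThrough (x y : X) : Set ℝ := diam '' {U | U ∈ 𝒟 ∧ x ∈ U ∧ y ∈ U}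

variable {𝒟 diam}

lemma diamsThrough_comm (x y : X) : diamsThrough 𝒟 diam x y = diamsThrough 𝒟 diam y x := by
  unfold diamsThrough
  congr 1
  ext U
  exact and_congr_right' and_comm

lemma diamsThrough_nonempty (hcover : ∀ x y : X, ∃ U ∈ 𝒟, x ∈ U ∧ y ∈ U) (x y : X) :
    (diamsThrough 𝒟 diam x y).Nonempty :=
  let ⟨U, hU, hx, hy⟩ := hcover x y
  ⟨diam U, U, ⟨hU, hx, hy⟩, rfl⟩

lemma nonneg_of_mem_diamsThrough (hnonneg : ∀ U ∈ 𝒟, 0 ≤ diam U) {x y : X} {r : ℝ}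
    (hr : r ∈ diamsThrough 𝒟 diam x y) : 0 ≤ r := by
  obtain ⟨U, ⟨hU, -, -⟩, rfl⟩ := hr
  exact hnonneg U hU

lemma sInf_diamsThrough_nonneg (hnonneg : ∀ U ∈ 𝒟, 0 ≤ diam U) (x y : X) :
    0 ≤ sInf (diamsThrough 𝒟 diam x y) :=
  Real.sInf_nonneg fun _ => nonneg_of_mem_diamsThrough hnonneg

/-- Two members of `𝒟` through `x, y` and `y, z` meet at `y`, so their union lies in `𝒟`,
contains `x` and `z`, and has diameter at most the sum. -/
lemma sInf_diamsThrough_triangle (hcover : ∀ x y : X, ∃ U ∈ 𝒟, x ∈ U ∧ y ∈ U)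
    (hunion : ∀ U ∈ 𝒟, ∀ V ∈ 𝒟, (U ∩ V).Nonempty → U ∪ V ∈ 𝒟)
    (hnonneg : ∀ U ∈ 𝒟, 0 ≤ diam U)
    (htri : ∀ U ∈ 𝒟, ∀ V ∈ 𝒟, (U ∩ V).Nonempty → diam (U ∪ V) ≤ diam U + diam V)
    (x y z : X) :
    sInf (diamsThrough 𝒟 diam x z) ≤
      sInf (diamsThrough 𝒟 diam x y) + sInf (diamsThrough 𝒟 diam y z) := by
  refine le_csInf_add_csInf (diamsThrough_nonempty hcover x y)
    (diamsThrough_nonempty hcover y z) ?_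
  rintro _ ⟨U, ⟨hU, hxU, hyU⟩, rfl⟩ _ ⟨V, ⟨hV, hyV, hzV⟩, rfl⟩
  have hUV : (U ∩ V).Nonempty := ⟨y, hyU, hyV⟩
  calc sInf (diamsThrough 𝒟 diam x z)
      ≤ diam (U ∪ V) :=
        csInf_le ⟨0, fun _ => nonneg_of_mem_diamsThrough hnonneg⟩
          ⟨U ∪ V, ⟨hunion U hU V hV hUV, .inl hxU, .inr hzV⟩, rfl⟩
    _ ≤ diam U + diam V := htri U hU V hV hUV

end DiameterSpace

theorem stmt_1_general {X : Type*} (𝒟 : Set (Set X)) (diam : Set X → ℝ)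
    (hcover : ∀ x y : X, ∃ U ∈ 𝒟, x ∈ U ∧ y ∈ U)
    (hunion : ∀ U ∈ 𝒟, ∀ V ∈ 𝒟, (U ∩ V).Nonempty → U ∪ V ∈ 𝒟)
    (hnonneg : ∀ U ∈ 𝒟, 0 ≤ diam U)
    (htri : ∀ U ∈ 𝒟, ∀ V ∈ 𝒟, (U ∩ V).Nonempty → diam (U ∪ V) ≤ diam U + diam V) :
    let d : X → X → ℝ := fun x y =>
      if x = y then 0 else sInf (diam '' {U | U ∈ 𝒟 ∧ x ∈ U ∧ y ∈ U})
    (∀ x y : X, 0 ≤ d x y) ∧ (∀ x : X, d x x = 0) ∧ (∀ x y : X, d x y = d y x) ∧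
      (∀ x y z : X, d x z ≤ d x y + d y z) := by
  intro d
  have hnonneg' := sInf_diamsThrough_nonneg hnonneg
  refine ⟨fun x y => ?_, fun x => if_pos rfl, fun x y => ?_, ?_⟩
  · dsimp only [d]
    split_ifs
    exacts [le_rfl, hnonneg' x y]
  · dsimp only [d]
    rw [eq_comm (a := x)]
    exact congrArg _ (congrArg sInf (diamsThrough_comm x y))
  · exact triangle_ite_eq_zero hnonneg'
      (sInf_diamsThrough_triangle hcover hunion hnonneg htri)

/-- From a diameter space `(X, 𝒟, diam)` the induced distance
`d(x,y) = inf {diam U : U ∈ 𝒟, x,y ∈ U}` (and `d(x,x) = 0`) is a well-defined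
pseudometric: nonnegative, zero on the diagonal, symmetric, and satisfying the
triangle inequality. -/
theorem stmt_1 {X : Type*} [Nonempty X] (𝒟 : Set (Set X)) (diam : Set X → ℝ)
    (hcover : ∀ x y : X, ∃ U ∈ 𝒟, x ∈ U ∧ y ∈ U)
    (hunion : ∀ U ∈ 𝒟, ∀ V ∈ 𝒟, (U ∩ V).Nonempty → U ∪ V ∈ 𝒟)
    (hnonneg : ∀ U ∈ 𝒟, 0 ≤ diam U)
    (htri : ∀ U ∈ 𝒟, ∀ V ∈ 𝒟, (U ∩ V).Nonempty → diam (U ∪ V) ≤ diam U + diam V) :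
    let d : X → X → ℝ := fun x y =>
      if x = y then 0 else sInf (diam '' {U | U ∈ 𝒟 ∧ x ∈ U ∧ y ∈ U})
    (∀ x y : X, 0 ≤ d x y) ∧ (∀ x : X, d x x = 0) ∧ (∀ x y : X, d x y = d y x) ∧
      (∀ x y z : X, d x z ≤ d x y + d y z) :=
  stmt_1_general 𝒟 diam hcover hunion hnonneg htri
end

section
/- Under assumptions A1–A3, a sequence (x_n) of points of X that is not eventually constant is Cauchy with respect to the induced metric d if and only if for every positive integer M there exists m > M such that S_m contains all but finitely many points of the sequence. -/
/-!
Two distinct words lie at distance `λ ^ k` for the largest `k` with both in `S k`: the infimum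
is attained because a word lies in only finitely many `S k`. Hence a sequence whose tail lies in
one `S m`, `m` large, is Cauchy. Conversely, if the tail is `λ ^ M`-close, any two distinct tail
words share some `S k` with `k > M`; such pairs exist as the sequence is not eventually constant.
Let `m` be the least such `k` over all pairs, attained by a pair containing `a`. Any other tail
word `w` shares with `a` some `S k` with `k ≥ m`, and as `S k` meets `S m` at `a`, nestedness
gives `w ∈ S k ⊆ S m`.
-/

open Set

noncomputable def levelDist {α : Type*} [DecidableEq α] (lam : ℝ) (S : ℕ → Set α) (u v : α) :
    ℝ :=
  if u = v then 0 else sInf {r : ℝ | ∃ k : ℕ, r = lam ^ k ∧ u ∈ S k ∧ v ∈ S k}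

section LevelDist

variable {α : Type*} [DecidableEq α] {lam : ℝ} {S : ℕ → Set α} {u v : α}

theorem levelDist_le_pow (hlam : 0 ≤ lam) {k : ℕ} (hu : u ∈ S k) (hv : v ∈ S k) :
    levelDist lam S u v ≤ lam ^ k := by
  unfold levelDist
  split_ifs
  · positivity
  · refine csInf_le ⟨0, ?_⟩ ⟨k, rfl, hu, hv⟩
    rintro r ⟨j, rfl, -, -⟩
    positivity

theorem exists_levelDist_eq_pow (hne : u ≠ v) (hS0 : S 0 = univ)
    (hfin : {k | u ∈ S k}.Finite) :
    ∃ k, u ∈ S k ∧ v ∈ S k ∧ levelDist lam S u v = lam ^ k := by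
  have hne' : {r : ℝ | ∃ k : ℕ, r = lam ^ k ∧ u ∈ S k ∧ v ∈ S k}.Nonempty :=
    ⟨lam ^ 0, 0, rfl, by simp [hS0]⟩
  have hfin' : {r : ℝ | ∃ k : ℕ, r = lam ^ k ∧ u ∈ S k ∧ v ∈ S k}.Finite := by
    refine (hfin.image (lam ^ ·)).subset ?_
    rintro r ⟨k, rfl, hu, -⟩
    exact ⟨k, hu, rfl⟩
  obtain ⟨k, hk, hu, hv⟩ := hne'.csInf_mem hfin'
  exact ⟨k, hu, hv, by rw [levelDist, if_neg hne, hk]⟩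

theorem exists_gt_mem_of_levelDist_lt_pow (hlam0 : 0 < lam) (hlam1 : lam < 1) (hne : u ≠ v)
    (hS0 : S 0 = univ) (hfin : {k | u ∈ S k}.Finite) {K : ℕ}
    (h : levelDist lam S u v < lam ^ K) : ∃ k, K < k ∧ u ∈ S k ∧ v ∈ S k := by
  obtain ⟨k, hu, hv, hk⟩ := exists_levelDist_eq_pow hne hS0 hfin (lam := lam)
  rw [hk] at h
  exact ⟨k, (pow_lt_pow_iff_right_of_lt_one₀ hlam0 hlam1).mp h, hu, hv⟩

end LevelDist

theorem exists_gt_subset_of_pairwise_exists_gt_mem {α : Type*} {S : ℕ → Set α}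
    (hnest : ∀ i j : ℕ, i < j → (S i ∩ S j).Nonempty → S j ⊆ S i) {T : Set α} {M : ℕ}
    (hT : T.Nontrivial) (hpair : T.Pairwise fun u v => ∃ k, M < k ∧ u ∈ S k ∧ v ∈ S k) :
    ∃ m, M < m ∧ T ⊆ S m := by
  classical
  have hex : ∃ k, M < k ∧ ∃ a ∈ T, ∃ b ∈ T, a ≠ b ∧ a ∈ S k ∧ b ∈ S k := by
    obtain ⟨a, ha, b, hb, hab⟩ := hT
    obtain ⟨k, hk, hak, hbk⟩ := hpair ha hb hab
    exact ⟨k, hk, a, ha, b, hb, hab, hak, hbk⟩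
  obtain ⟨hMm, a, ha, -, -, -, ham, -⟩ := Nat.find_spec hex
  refine ⟨Nat.find hex, hMm, fun w hw => ?_⟩
  rcases eq_or_ne w a with rfl | hwa
  · exact ham
  obtain ⟨k, hMk, hwk, hak⟩ := hpair hw ha hwa
  have hmk : Nat.find hex ≤ k := Nat.find_min' hex ⟨hMk, w, hw, a, ha, hwa, hwk, hak⟩
  rcases hmk.eq_or_lt with heq | hlt
  · rwa [heq]
  · exact hnest _ k hlt ⟨a, ham, hak⟩ hwk

section Sequences

variable {α : Type*} [DecidableEq α] {lam : ℝ} {S : ℕ → Set α} {x : ℕ → α}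

theorem exists_gt_finite_notMem_of_cauchy (hlam0 : 0 < lam) (hlam1 : lam < 1)
    (hS0 : S 0 = univ) (hnest : ∀ i j : ℕ, i < j → (S i ∩ S j).Nonempty → S j ⊆ S i)
    (hfin : ∀ u : α, {k : ℕ | u ∈ S k}.Finite) (hproper : ¬ ∃ N : ℕ, ∀ n : ℕ, N ≤ n → x n = x N)
    (hcauchy : ∀ ε : ℝ, 0 < ε → ∃ N : ℕ, ∀ m n : ℕ, N ≤ m → N ≤ n →
      levelDist lam S (x m) (x n) < ε) (M : ℕ) :
    ∃ m, M < m ∧ {n : ℕ | x n ∉ S m}.Finite := by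
  obtain ⟨N, hN⟩ := hcauchy (lam ^ M) (pow_pos hlam0 M)
  have htail : (x '' Ici N).Nontrivial := by
    push Not at hproper
    obtain ⟨q, hqN, hq⟩ := hproper N
    exact ⟨x q, mem_image_of_mem x hqN, x N, mem_image_of_mem x (mem_Ici.mpr le_rfl), hq⟩
  obtain ⟨m, hMm, hsub⟩ := exists_gt_subset_of_pairwise_exists_gt_mem hnest htail <| by
    rintro _ ⟨a, ha, rfl⟩ _ ⟨b, hb, rfl⟩ hab
    exact exists_gt_mem_of_levelDist_lt_pow hlam0 hlam1 hab hS0 (hfin _) (hN a b ha hb)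
  refine ⟨m, hMm, (finite_Iio N).subset fun n hn => ?_⟩
  by_contra hnN
  exact hn (hsub (mem_image_of_mem x (mem_Ici.mpr (not_lt.mp hnN))))

theorem cauchy_of_exists_gt_finite_notMem (hlam0 : 0 ≤ lam) (hlam1 : lam < 1)
    (h : ∀ M : ℕ, ∃ m, M < m ∧ {n : ℕ | x n ∉ S m}.Finite) (ε : ℝ) (hε : 0 < ε) :
    ∃ N : ℕ, ∀ m n : ℕ, N ≤ m → N ≤ n → levelDist lam S (x m) (x n) < ε := by
  obtain ⟨K, hK⟩ := exists_pow_lt_of_lt_one hε hlam1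
  obtain ⟨m, hKm, hm⟩ := h K
  obtain ⟨B, hB⟩ := hm.bddAbove
  have hmem : ∀ n, B < n → x n ∈ S m := fun n hn => by
    by_contra hc
    exact hn.not_ge (hB hc)
  refine ⟨B + 1, fun p q hp hq => ?_⟩
  calc levelDist lam S (x p) (x q) ≤ lam ^ m := levelDist_le_pow hlam0 (hmem p hp) (hmem q hq)
    _ ≤ lam ^ K := pow_le_pow_of_le_one hlam0 hlam1.le hKm.le
    _ < ε := hK

end Sequences

theorem stmt_5_general (lam : ℝ) (hlam0 : 0 < lam) (hlam1 : lam < 1)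
    (S : ℕ → Set (List Bool)) (hS0 : S 0 = Set.univ)
    (hnest : ∀ i j : ℕ, i < j → (S i ∩ S j).Nonempty → S j ⊆ S i)
    (hfin : ∀ x : List Bool, {k : ℕ | x ∈ S k}.Finite)
    (x : ℕ → List Bool)
    (hproper : ¬ ∃ N : ℕ, ∀ n : ℕ, N ≤ n → x n = x N) :
    let d : List Bool → List Bool → ℝ := fun u v =>
      if u = v then 0 else sInf {r : ℝ | ∃ k : ℕ, r = lam ^ k ∧ u ∈ S k ∧ v ∈ S k}
    ((∀ ε : ℝ, 0 < ε → ∃ N : ℕ, ∀ m n : ℕ, N ≤ m → N ≤ n → d (x m) (x n) < ε) ↔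
      ∀ M : ℕ, ∃ m : ℕ, M < m ∧ {n : ℕ | x n ∉ S m}.Finite) :=
  ⟨exists_gt_finite_notMem_of_cauchy hlam0 hlam1 hS0 hnest hfin hproper,
    cauchy_of_exists_gt_finite_notMem hlam0.le hlam1⟩

/-- Under A1–A3, a sequence of words that is not eventually constant is Cauchy for
the induced metric iff for every `M` there is `m > M` such that `S m` contains all
but finitely many terms of the sequence. -/
theorem stmt_5 (lam : ℝ) (hlam0 : 0 < lam) (hlam1 : lam < 1)
    (S : ℕ → Set (List Bool)) (hS0 : S 0 = Set.univ)
    (hnest : ∀ i j : ℕ, i < j → (S i ∩ S j).Nonempty → S j ⊆ S i)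
    (hfin : ∀ x : List Bool, {k : ℕ | x ∈ S k}.Finite)
    (hcover : ∀ N : ℕ, ∃ I : Finset ℕ, (∀ i ∈ I, N < i) ∧
      (Set.univ \ ⋃ i ∈ I, S i).Finite)
    (x : ℕ → List Bool)
    (hproper : ¬ ∃ N : ℕ, ∀ n : ℕ, N ≤ n → x n = x N) :
    let d : List Bool → List Bool → ℝ := fun u v =>
      if u = v then 0 else sInf {r : ℝ | ∃ k : ℕ, r = lam ^ k ∧ u ∈ S k ∧ v ∈ S k}
    ((∀ ε : ℝ, 0 < ε → ∃ N : ℕ, ∀ m n : ℕ, N ≤ m → N ≤ n → d (x m) (x n) < ε) ↔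
      ∀ M : ℕ, ∃ m : ℕ, M < m ∧ {n : ℕ | x n ∉ S m}.Finite) :=
  stmt_5_general lam hlam0 hlam1 S hS0 hnest hfin x hproper
end

section
/- Under assumptions A1–A3, no proper Cauchy sequence in the completion of (X, d) converges to a point of X; equivalently, every point of X is isolated in the completion. -/
/-! A point `y` lies in only finitely many `S k`, say only for `k ≤ K`, so every other point is at
distance at least `lam ^ K` from `y`. Hence a sequence converging to `y` is eventually equal to
`y`, i.e. it is not proper. -/

open Filter Topology

lemma pow_le_csInf_of_forall_le {lam : ℝ} (hlam0 : 0 ≤ lam) (hlam1 : lam ≤ 1) {P : ℕ → Prop}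
    (hP : ∃ k, P k) {K : ℕ} (hK : ∀ k, P k → k ≤ K) :
    lam ^ K ≤ sInf {r : ℝ | ∃ k : ℕ, r = lam ^ k ∧ P k} := by
  obtain ⟨k₀, hk₀⟩ := hP
  refine le_csInf ⟨lam ^ k₀, k₀, rfl, hk₀⟩ ?_
  rintro r ⟨k, rfl, hk⟩
  exact pow_le_pow_of_le_one hlam0 hlam1 (hK k hk)

lemma eventually_eq_of_tendsto_zero_of_forall_ne_le {α ι : Type*} {l : Filter ι} {x : ι → α}
    {y : α} {D : α → ℝ} (hconv : Tendsto (fun n => D (x n)) l (𝓝 0)) {δ : ℝ} (hδ : 0 < δ)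
    (hsep : ∀ u, u ≠ y → δ ≤ D u) : ∀ᶠ n in l, x n = y := by
  filter_upwards [hconv.eventually_lt_const hδ] with n hn
  by_contra hne
  exact (hsep _ hne).not_gt hn

lemma exists_forall_ge_eq_of_eventually_eq {α : Type*} {x : ℕ → α} {y : α}
    (h : ∀ᶠ n in atTop, x n = y) : ∃ N, ∀ n, N ≤ n → x n = x N := by
  obtain ⟨N, hN⟩ := eventually_atTop.1 h
  exact ⟨N, fun n hn => (hN n hn).trans (hN N le_rfl).symm⟩

theorem stmt_6_general (lam : ℝ) (hlam0 : 0 < lam) (hlam1 : lam < 1)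
    (S : ℕ → Set (List Bool)) (hS0 : S 0 = Set.univ)
    (hfin : ∀ x : List Bool, {k : ℕ | x ∈ S k}.Finite)
    (x : ℕ → List Bool)
    (hproper : ¬ ∃ N : ℕ, ∀ n : ℕ, N ≤ n → x n = x N) :
    let d : List Bool → List Bool → ℝ := fun u v =>
      if u = v then 0 else sInf {r : ℝ | ∃ k : ℕ, r = lam ^ k ∧ u ∈ S k ∧ v ∈ S k}
    (∀ ε : ℝ, 0 < ε → ∃ N : ℕ, ∀ m n : ℕ, N ≤ m → N ≤ n → d (x m) (x n) < ε) →
      ∀ y : List Bool,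
        ¬ Filter.Tendsto (fun n => d (x n) y) Filter.atTop (nhds 0) := by
  intro d _ y hconv
  obtain ⟨K, hK⟩ := (hfin y).bddAbove
  have hsep : ∀ u, u ≠ y → lam ^ K ≤ d u y := fun u hu => by
    simpa only [d, if_neg hu] using pow_le_csInf_of_forall_le hlam0.le hlam1.le
      ⟨0, by simp [hS0]⟩ fun k hk => hK hk.2
  exact hproper <| exists_forall_ge_eq_of_eventually_eq <|
    eventually_eq_of_tendsto_zero_of_forall_ne_le hconv (pow_pos hlam0 K) hsep

/-- Under A1–A3, no proper Cauchy sequence (one that is not eventually constant)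
converges to a point of `X` in the induced metric; i.e. every point of `X` is
isolated in the completion. -/
theorem stmt_6 (lam : ℝ) (hlam0 : 0 < lam) (hlam1 : lam < 1)
    (S : ℕ → Set (List Bool)) (hS0 : S 0 = Set.univ)
    (hnest : ∀ i j : ℕ, i < j → (S i ∩ S j).Nonempty → S j ⊆ S i)
    (hfin : ∀ x : List Bool, {k : ℕ | x ∈ S k}.Finite)
    (hcover : ∀ N : ℕ, ∃ I : Finset ℕ, (∀ i ∈ I, N < i) ∧
      (Set.univ \ ⋃ i ∈ I, S i).Finite)
    (x : ℕ → List Bool)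
    (hproper : ¬ ∃ N : ℕ, ∀ n : ℕ, N ≤ n → x n = x N) :
    let d : List Bool → List Bool → ℝ := fun u v =>
      if u = v then 0 else sInf {r : ℝ | ∃ k : ℕ, r = lam ^ k ∧ u ∈ S k ∧ v ∈ S k}
    (∀ ε : ℝ, 0 < ε → ∃ N : ℕ, ∀ m n : ℕ, N ≤ m → N ≤ n → d (x m) (x n) < ε) →
      ∀ y : List Bool,
        ¬ Filter.Tendsto (fun n => d (x n) y) Filter.atTop (nhds 0) :=
  stmt_6_general lam hlam0 hlam1 S hS0 hfin x hproper
end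

section
/- For every word w over the alphabet {a,b}, at least one of aw, bw is available, where a word v is called forbidden if there exists a nonempty word u such that v is a prefix of u^∞ and len(v) > len(u)^2, and available otherwise. -/
/-!
If `a w` and `b w` were both forbidden, with periods `p` and `q`, then `|w| ≥ max(p, q)² ≥ pq ≥ lcm(p, q)`,
so the letter at position `lcm(p, q)` lies in `w` and, by periodicity, equals both first letters.
-/

namespace List

variable {α : Type*}

theorem length_flatten_replicate (n : ℕ) (u : List α) :
    (replicate n u).flatten.length = n * u.length := by
  simp [length_flatten, sum_replicate]

theorem getElem?_flatten_replicate {u : List α} {n i : ℕ} (hi : i < n * u.length) :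
    (replicate n u).flatten[i]? = u[i % u.length]? := by
  induction n generalizing i with
  | zero => simp at hi
  | succ n ih =>
    rw [replicate_succ, flatten_cons]
    rcases lt_or_ge i u.length with h | h
    · rw [getElem?_append_left h, Nat.mod_eq_of_lt h]
    · rw [getElem?_append_right h, ih (by rw [Nat.succ_mul] at hi; omega), Nat.mod_eq_sub_mod h]

theorem IsPrefix.getElem?_eq_of_flatten_replicate {u v : List α} {n i : ℕ}
    (h : v <+: (replicate n u).flatten) (hi : i < v.length) :
    v[i]? = u[i % u.length]? := by
  obtain ⟨t, ht⟩ := h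
  have hlen := length_flatten_replicate n u
  rw [← ht, length_append] at hlen
  rw [← getElem?_append_left hi, ht, getElem?_flatten_replicate (by omega)]

theorem IsPrefix.getElem?_eq_head?_of_flatten_replicate {u v : List α} {n i : ℕ}
    (h : v <+: (replicate n u).flatten) (hd : u.length ∣ i) (hi : i < v.length) :
    v[i]? = v.head? := by
  rw [head?_eq_getElem?, h.getElem?_eq_of_flatten_replicate hi,
    h.getElem?_eq_of_flatten_replicate (by omega), Nat.mod_eq_zero_of_dvd hd, Nat.zero_mod]

theorem length_pos_of_cons_prefix_flatten_replicate {x : α} {w u : List α} {n : ℕ}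
    (h : x :: w <+: (replicate n u).flatten) : 0 < u.length := by
  have := length_flatten_replicate n u ▸ h.length_le
  rw [length_cons] at this
  exact Nat.pos_of_mul_pos_left (a := n) (by omega)

theorem head_eq_of_cons_prefix_flatten_replicate {x y : α} {w u u' : List α} {n m : ℕ}
    (hx : x :: w <+: (replicate n u).flatten) (hy : y :: w <+: (replicate m u').flatten)
    (hlen : u.length * u'.length ≤ w.length) : x = y := by
  have hu := length_pos_of_cons_prefix_flatten_replicate hx
  have hu' := length_pos_of_cons_prefix_flatten_replicate hy
  have hLw : Nat.lcm u.length u'.length < (x :: w).length :=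
    Nat.lt_succ_of_le ((Nat.le_of_dvd (Nat.mul_pos hu hu') (Nat.lcm_dvd_mul _ _)).trans hlen)
  have hxL := hx.getElem?_eq_head?_of_flatten_replicate (Nat.dvd_lcm_left _ _) hLw
  have hyL := hy.getElem?_eq_head?_of_flatten_replicate (Nat.dvd_lcm_right _ _) hLw
  obtain ⟨k, hk⟩ := Nat.exists_eq_succ_of_ne_zero (Nat.lcm_pos hu hu').ne'
  rw [hk, getElem?_cons_succ] at hxL hyL
  simpa using hxL.symm.trans hyL

end List

/-- A nonempty word `v` over `{a,b}` is *forbidden* if there is a nonempty word `u`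
such that `v` is a prefix of `u^∞` and `len v > (len u)^2`; it is *available*
otherwise.  For every word `w`, at least one of `aw`, `bw` is available. -/
theorem stmt_8
    (Forbidden : List Bool → Prop)
    (hForbidden : ∀ v : List Bool, Forbidden v ↔
      ∃ u : List Bool, u ≠ [] ∧ (∃ n : ℕ, v <+: (List.replicate n u).flatten) ∧
        u.length ^ 2 < v.length)
    (w : List Bool) :
    ¬ Forbidden (true :: w) ∨ ¬ Forbidden (false :: w) := by
  by_contra! hboth
  obtain ⟨⟨u, -, ⟨n, hu⟩, hpu⟩, ⟨u', -, ⟨m, hu'⟩, hpu'⟩⟩ :=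
    And.imp (hForbidden _).1 (hForbidden _).1 hboth
  have hlen : u.length * u'.length ≤ w.length := by
    rw [List.length_cons] at hpu hpu'
    rcases le_total u.length u'.length with h | h <;> nlinarith
  exact absurd (List.head_eq_of_cons_prefix_flatten_replicate hu hu' hlen) (by decide)
end

section
/- For every word w over {a,b}, at least one of wa, wb is available. -/
/-!
A forbidden word `w ++ [c]` is a prefix of `u^∞`, so it has period `p = u.length`, and its last
letter is `c = w[|w| - p]`. If `w ++ [a]` and `w ++ [b]` are forbidden with periods `p ≠ q`,
then `p², q² ≤ |w|` forces `p + q ≤ |w|`, and the periods `q` and `p` of `w` lead from position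
`|w| - p - q` to `|w| - p` and to `|w| - q` respectively, so `a = b`.
-/

theorem Nat.add_le_of_ne_of_sq_le {p q n : ℕ} (hpq : p ≠ q) (hp : p ^ 2 ≤ n) (hq : q ^ 2 ≤ n) :
    p + q ≤ n := by
  rcases Nat.lt_or_gt_of_ne hpq with h | h <;> nlinarith

namespace List

variable {α : Type*}

theorem hasPeriod_flatten_replicate (u : List α) (n : ℕ) :
    (replicate n u).flatten.HasPeriod u.length := by
  cases n with
  | zero => exact hasPeriod_empty _
  | succ n =>
    have hcons : (replicate (n + 1) u).flatten = u ++ (replicate n u).flatten := by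
      simp [replicate_succ]
    have hsnoc : (replicate (n + 1) u).flatten = (replicate n u).flatten ++ u := by
      simp [replicate_succ']
    rw [HasPeriod, hcons, take_left' rfl, prefix_append_right_inj, ← hcons, hsnoc]
    exact prefix_append _ _

theorem HasPeriod.getElem?_length_sub {w : List α} {x : α} {p : ℕ}
    (h : (w ++ [x]).HasPeriod p) (hp : 0 < p) (hpw : p ≤ w.length) :
    w[w.length - p]? = some x := by
  have key := hasPeriod_iff_getElem?.mp h (w.length - p) (by simp; omega)
  rwa [getElem?_append_left (by omega), Nat.sub_add_cancel hpw, getElem?_concat_length] at key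

theorem HasPeriod.getElem?_length_sub_eq {w : List α} {p q : ℕ}
    (hp : w.HasPeriod p) (hq : w.HasPeriod q) (hp0 : 0 < p) (hq0 : 0 < q)
    (hpq : p + q ≤ w.length) :
    w[w.length - p]? = w[w.length - q]? := by
  obtain ⟨j, hj⟩ : ∃ j, w.length = j + p + q := ⟨w.length - p - q, by omega⟩
  have hjq : w[j]? = w[j + q]? := hasPeriod_iff_getElem?.mp hq j (by omega)
  have hjp : w[j]? = w[j + p]? := hasPeriod_iff_getElem?.mp hp j (by omega)
  rw [show w.length - p = j + q by omega, show w.length - q = j + p by omega, ← hjq, hjp]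

theorem eq_of_hasPeriod_append_singleton {w : List α} {x y : α} {p q : ℕ}
    (hx : (w ++ [x]).HasPeriod p) (hy : (w ++ [y]).HasPeriod q) (hp : 0 < p) (hq : 0 < q)
    (hpw : p ^ 2 ≤ w.length) (hqw : q ^ 2 ≤ w.length) : x = y := by
  have hp_le : p ≤ w.length := (Nat.le_self_pow two_ne_zero p).trans hpw
  have hq_le : q ≤ w.length := (Nat.le_self_pow two_ne_zero q).trans hqw
  apply Option.some_injective
  rw [← hx.getElem?_length_sub hp hp_le, ← hy.getElem?_length_sub hq hq_le]
  rcases eq_or_ne p q with rfl | hpq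
  · rfl
  · exact (hx.infix (prefix_append w [x]).isInfix).getElem?_length_sub_eq
      (hy.infix (prefix_append w [y]).isInfix) hp hq (Nat.add_le_of_ne_of_sq_le hpq hpw hqw)

end List

/-- For every word `w` over `{a,b}`, at least one of `wa`, `wb` is available
(where a nonempty word `v` is forbidden if it is a prefix of `u^∞` for some
nonempty `u` with `len v > (len u)^2`, and available otherwise). -/
theorem stmt_9
    (Forbidden : List Bool → Prop)
    (hForbidden : ∀ v : List Bool, Forbidden v ↔
      ∃ u : List Bool, u ≠ [] ∧ (∃ n : ℕ, v <+: (List.replicate n u).flatten) ∧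
        u.length ^ 2 < v.length)
    (w : List Bool) :
    ¬ Forbidden (w ++ [true]) ∨ ¬ Forbidden (w ++ [false]) := by
  rw [← not_and_or, hForbidden, hForbidden]
  rintro ⟨⟨u, hu, ⟨m, hm⟩, hlen⟩, ⟨u', hu', ⟨m', hm'⟩, hlen'⟩⟩
  refine Bool.noConfusion (List.eq_of_hasPeriod_append_singleton
    ((List.hasPeriod_flatten_replicate u m).infix hm.isInfix)
    ((List.hasPeriod_flatten_replicate u' m').infix hm'.isInfix)
    (List.length_pos_iff.mpr hu) (List.length_pos_iff.mpr hu') ?_ ?_)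
  · simpa [Nat.lt_succ_iff] using hlen
  · simpa [Nat.lt_succ_iff] using hlen'
end

section
/- Let w be a nonempty word over {a,b}, let u be a prefix of w^∞ with len(u) ≥ len(w)^2, and let s be a character such that v = us is not a prefix of w^∞. Then v is available. -/
/-!
Suppose `v = u ++ [s]` were a prefix of `t^∞` with `|t|² < |v|`, i.e. `|t|² ≤ |u|`. Since also
`|w|² ≤ |u|`, we get `|w|·|t| ≤ |u|`, so the words `w^|t|` and `t^|w|`, both of length `|w|·|t|`,
are prefixes of `u` and hence equal. Then `t^∞ = (t^|w|)^∞ = (w^|t|)^∞ = w^∞`, so `v` would be a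
prefix of `w^∞`.
-/

namespace List

variable {α : Type*}

theorem flatten_replicate_prefix_of_le (l : List α) {a b : ℕ} (h : a ≤ b) :
    (replicate a l).flatten <+: (replicate b l).flatten := by
  obtain ⟨c, rfl⟩ := Nat.exists_eq_add_of_le h
  rw [replicate_add, flatten_append]
  exact prefix_append _ _

theorem flatten_replicate_mul (l : List α) (a b : ℕ) :
    (replicate (a * b) l).flatten = (replicate a (replicate b l).flatten).flatten := by
  induction a with
  | zero => simp
  | succ a ih =>
    rw [Nat.succ_mul, replicate_add, flatten_append, ih, replicate_succ', flatten_append,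
      flatten_singleton]

theorem flatten_replicate_prefix_of_prefix {l v : List α} {k n : ℕ}
    (hv : v <+: (replicate n l).flatten) (hk : k * l.length ≤ v.length) :
    (replicate k l).flatten <+: v :=
  prefix_of_prefix_length_le (flatten_replicate_prefix_of_le l (le_max_left k n))
    (hv.trans (flatten_replicate_prefix_of_le l (le_max_right k n))) (by simpa using hk)

theorem flatten_replicate_length_swap_of_prefix {w t u : List α} {m n : ℕ}
    (hw : u <+: (replicate m w).flatten) (ht : u <+: (replicate n t).flatten)
    (hlen : w.length * t.length ≤ u.length) :
    (replicate t.length w).flatten = (replicate w.length t).flatten := by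
  have hwu := flatten_replicate_prefix_of_prefix hw (k := t.length) (by rwa [Nat.mul_comm])
  have htu := flatten_replicate_prefix_of_prefix ht (k := w.length) hlen
  exact (prefix_of_prefix_length_le hwu htu (by simp [Nat.mul_comm])).eq_of_length
    (by simp [Nat.mul_comm])

theorem exists_prefix_flatten_replicate_of_eq {t w v : List α} {p q n : ℕ} (hp : 0 < p)
    (h : (replicate p t).flatten = (replicate q w).flatten)
    (hv : v <+: (replicate n t).flatten) : ∃ N, v <+: (replicate N w).flatten :=
  ⟨n * q, by
    calc v <+: (replicate n t).flatten := hv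
      _ <+: (replicate (n * p) t).flatten :=
        flatten_replicate_prefix_of_le t (Nat.le_mul_of_pos_right n hp)
      _ = (replicate (n * q) w).flatten := by rw [flatten_replicate_mul, h, ← flatten_replicate_mul]⟩

end List

/-- If `w` is a nonempty word, `u` is a prefix of `w^∞` with `len u ≥ (len w)^2`,
and `s` is a character such that `v = u ++ [s]` is not a prefix of `w^∞`, then
`v` is available. -/
theorem stmt_10
    (Forbidden : List Bool → Prop)
    (hForbidden : ∀ v : List Bool, Forbidden v ↔
      ∃ t : List Bool, t ≠ [] ∧ (∃ n : ℕ, v <+: (List.replicate n t).flatten) ∧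
        t.length ^ 2 < v.length)
    (w u : List Bool) (s : Bool) (hw : w ≠ [])
    (hu : ∃ n : ℕ, u <+: (List.replicate n w).flatten)
    (hlen : w.length ^ 2 ≤ u.length)
    (hs : ∀ n : ℕ, ¬ (u ++ [s]) <+: (List.replicate n w).flatten) :
    ¬ Forbidden (u ++ [s]) := by
  rw [hForbidden]
  rintro ⟨t, -, ⟨m, hm⟩, ht⟩
  obtain ⟨n, hn⟩ := hu
  have htu : t.length ^ 2 ≤ u.length := by simpa [Nat.lt_succ_iff] using ht
  have hwt : w.length * t.length ≤ u.length := by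
    nlinarith [sq_nonneg ((w.length : ℤ) - t.length)]
  have hcomm := List.flatten_replicate_length_swap_of_prefix hn
    ((List.prefix_append u [s]).trans hm) hwt
  obtain ⟨N, hN⟩ := List.exists_prefix_flatten_replicate_of_eq
    (List.length_pos_iff.mpr hw) hcomm.symm hm
  exact hs N hN
end

section
/- Let w be a minimal word over {a,b} and let s be its last character, and let u be the cyclic permutation of w satisfying sw = us. Then u is also minimal. -/
/-! Rotating a word by one shifts its periodic extension by one. So a nonempty `v` with the
same periodic extension as `s :: w'` has `v.rotate 1`, which is just as long, with the same
periodic extension as `(s :: w').rotate 1 = w' ++ [s]`, and minimality of `w' ++ [s]` bounds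
its length. -/

theorem List.getD_rotate_mod_length {α : Type*} (l : List α) (n i : ℕ) (d : α) :
    (l.rotate n).getD (i % (l.rotate n).length) d = l.getD ((i + n) % l.length) d := by
  rcases Nat.eq_zero_or_pos l.length with h | hl
  · simp [List.length_eq_zero_iff.mp h]
  have hi : i % l.length < l.length := Nat.mod_lt _ hl
  rw [List.length_rotate, List.getD_eq_getElem _ _ (by simpa using hi), List.getElem_rotate,
    List.getD_eq_getElem _ _ (Nat.mod_lt _ hl)]
  simp only [Nat.mod_add_mod]

/-- If `w = w' ++ [s]` is a minimal word with last character `s`, then its cyclic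
permutation `u = s :: w'` (which satisfies `s·w = u·s`) is also minimal. -/
theorem stmt_16 (w' : List Bool) (s : Bool) :
    let inf : List Bool → ℕ → Bool := fun u i => u.getD (i % u.length) false
    let Minimal : List Bool → Prop := fun v =>
      v ≠ [] ∧ ∀ u : List Bool, u ≠ [] → inf u = inf v → v.length ≤ u.length
    Minimal (w' ++ [s]) → Minimal (s :: w') := by
  intro inf Minimal ⟨_, hmin⟩
  refine ⟨List.cons_ne_nil _ _, fun v hv hinf => ?_⟩
  have hshift (l : List Bool) : inf (l.rotate 1) = fun i => inf l (i + 1) :=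
    funext fun i => l.getD_rotate_mod_length 1 i false
  have hrot : (s :: w').rotate 1 = w' ++ [s] := by simp
  have hinf_rot : inf (v.rotate 1) = inf (w' ++ [s]) := by rw [← hrot, hshift, hshift, hinf]
  simpa using hmin (v.rotate 1) (by simpa using hv) hinf_rot
end

section
/- For every word w over {a,b} and every available word v with len(v) > len(w), if there exists a word u with both u ∈ W_v and wu ∈ W_v (where W_v = {vx : x a word}), then v is a prefix of w^∞; consequently len(v) ≤ len(w)^2 and there are only finitely many available words v such that W_v contains both some u and wu. -/
/-!
If `v` is a prefix of both `u` and `w ++ u` and is at least as long as `w`, then `v` begins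
with `w` and its tail is again a prefix of `v`, so `v <+: w ++ v`. Iterating, `v` is a
prefix of `w^∞`, i.e. `v` has period `|w|`. Availability forbids this once `|v| > |w|²`, which
bounds `|v|` and hence makes the set of such available words finite.
-/

namespace List

variable {α : Type*}

theorem prefix_append_self_of_prefix_append {u v w : List α} (hwv : w.length ≤ v.length)
    (hu : v <+: u) (hwu : v <+: w ++ u) : v <+: w ++ v := by
  obtain ⟨t, rfl⟩ := prefix_of_prefix_length_le (prefix_append w u) hwu hwv
  have htu : t <+: u := (prefix_append_right_inj w).mp hwu
  have htv : t <+: w ++ t := prefix_of_prefix_length_le htu hu (by simp)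
  exact (prefix_append_right_inj w).mpr htv

theorem prefix_flatten_replicate_append_of_prefix_append_self {v w : List α}
    (h : v <+: w ++ v) (n : ℕ) : v <+: (replicate n w).flatten ++ v := by
  induction n with
  | zero => simp
  | succ n ih =>
    simpa [replicate_succ, append_assoc] using h.trans ((prefix_append_right_inj w).mpr ih)

theorem prefix_flatten_replicate_of_prefix_append_self {v w : List α} (hw : w ≠ [])
    (h : v <+: w ++ v) : v <+: (replicate v.length w).flatten := by
  have hlen : v.length ≤ ((replicate v.length w).flatten).length := by
    simpa [length_flatten] using Nat.le_mul_of_pos_right v.length (length_pos_iff.mpr hw)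
  exact prefix_of_prefix_length_le
    (prefix_flatten_replicate_append_of_prefix_append_self h v.length) (prefix_append _ _) hlen

end List

/-- Fix a nonempty word `w`.  For every available word `v` with `len v > len w`,
if the set `W_v` of words with prefix `v` contains both some `u` and `wu`, then
`v` is a prefix of `w^∞`; consequently `len v ≤ (len w)^2`, and there are only
finitely many available words `v` such that `W_v` contains both some `u` and `wu`. -/
theorem stmt_18
    (Available : List Bool → Prop)
    (hAvailable : ∀ v : List Bool, Available v ↔
      ¬ ∃ t : List Bool, t ≠ [] ∧ (∃ n : ℕ, v <+: (List.replicate n t).flatten) ∧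
        t.length ^ 2 < v.length)
    (w : List Bool) (hw : w ≠ []) :
    (∀ v : List Bool, Available v → w.length < v.length →
      (∃ u : List Bool, v <+: u ∧ v <+: (w ++ u)) →
        (∃ n : ℕ, v <+: (List.replicate n w).flatten) ∧ v.length ≤ w.length ^ 2) ∧
      {v : List Bool | Available v ∧ ∃ u : List Bool, v <+: u ∧ v <+: (w ++ u)}.Finite := by
  have periodic : ∀ v : List Bool, Available v → w.length < v.length →
      (∃ u : List Bool, v <+: u ∧ v <+: (w ++ u)) →
        (∃ n : ℕ, v <+: (List.replicate n w).flatten) ∧ v.length ≤ w.length ^ 2 := by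
    rintro v hv hwv ⟨u, hu, hwu⟩
    have hpow : v <+: (List.replicate v.length w).flatten :=
      List.prefix_flatten_replicate_of_prefix_append_self hw
        (List.prefix_append_self_of_prefix_append hwv.le hu hwu)
    exact ⟨⟨_, hpow⟩, not_lt.mp fun hlt => (hAvailable v).mp hv ⟨w, hw, ⟨_, hpow⟩, hlt⟩⟩
  refine ⟨periodic, (List.finite_length_le Bool (w.length ^ 2)).subset ?_⟩
  rintro v ⟨hv, hu⟩
  rcases le_or_gt v.length w.length with hvw | hwv
  · exact hvw.trans (Nat.le_self_pow two_ne_zero _)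
  · exact (periodic v hv hwv hu).2
end
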